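/- arXiv:2510.02126 — 3 statements merged into one kernel-verified Lean document; each statement's English description precedes it below -/
import Mathlib

section
/- Let ℒ be an invertible linear operator on ℝ^{n×n} with κ := ‖ℒ‖_F ‖ℒ^{-1}‖_F (operator norms induced by the Frobenius norm), and let d₁, d₂, u > 0 with d₁ κ u < 1. Suppose W, V ∈ ℝ^{n×n} satisfy ‖ℒ(V) + W‖_F ≤ u (d₁ ‖ℒ‖_F ‖V‖_F + d₂ ‖W‖_F). Then ‖ℒ(V) + W‖_F ≤ u (d₁ κ + d₂)/(1 − d₁ κ u) · ‖W‖_F. -/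
open Matrix

attribute [local instance] Matrix.frobeniusNormedAddCommGroup Matrix.frobeniusNormedSpace

/-- The operator norm induced by the Frobenius norm, supplied explicitly because the
Frobenius topology is not reducibly the product topology of `Matrix`. -/
noncomputable instance frobeniusOpNormPort {n : ℕ} :
    Norm (Matrix (Fin n) (Fin n) ℝ →L[ℝ] Matrix (Fin n) (Fin n) ℝ) :=
  @ContinuousLinearMap.hasOpNorm ℝ ℝ (Matrix (Fin n) (Fin n) ℝ) (Matrix (Fin n) (Fin n) ℝ)
    _ _ _ _ _ _ (RingHom.id ℝ)

/-!
Writing `r = ‖ℒ(V) + W‖`, inverting `ℒ` gives `‖V‖ ≤ ‖ℒ⁻¹‖ (r + ‖W‖)`, so the hypothesis becomes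
`r ≤ d₁ κ u · r + u (d₁ κ + d₂) ‖W‖`; since `d₁ κ u < 1`, the `r` on the right can be absorbed.
-/

lemma le_div_one_sub_of_le_mul_add {r a c : ℝ} (ha : a < 1) (h : r ≤ a * r + c) :
    r ≤ c / (1 - a) := by
  rw [le_div_iff₀ (sub_pos.2 ha)]
  linarith

lemma ContinuousLinearMap.norm_le_opNorm_mul_norm_add_add_norm {𝕜 E F : Type*}
    [NontriviallyNormedField 𝕜] [SeminormedAddCommGroup E] [SeminormedAddCommGroup F]
    [NormedSpace 𝕜 E] [NormedSpace 𝕜 F] {L : E →L[𝕜] F} {Linv : F →L[𝕜] E}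
    (hLinv : Function.LeftInverse Linv L) (x : E) (w : F) :
    ‖x‖ ≤ ‖Linv‖ * (‖L x + w‖ + ‖w‖) :=
  calc ‖x‖ = ‖Linv (L x)‖ := by rw [hLinv]
    _ ≤ ‖Linv‖ * ‖L x‖ := Linv.le_opNorm _
    _ ≤ ‖Linv‖ * (‖L x + w‖ + ‖w‖) := by gcongr; exact norm_le_add_norm_add _ _

theorem residual_bound_of_solver_assumption_general {n : ℕ}
    (L Linv : Matrix (Fin n) (Fin n) ℝ →L[ℝ] Matrix (Fin n) (Fin n) ℝ)
    (hLinv₁ : ∀ M, Linv (L M) = M)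
    (d₁ d₂ u : ℝ) (hd₁ : 0 < d₁) (hu : 0 < u)
    (hκ : d₁ * (‖L‖ * ‖Linv‖) * u < 1)
    (W V : Matrix (Fin n) (Fin n) ℝ)
    (hres : ‖L V + W‖ ≤ u * (d₁ * ‖L‖ * ‖V‖ + d₂ * ‖W‖)) :
    ‖L V + W‖ ≤ u * (d₁ * (‖L‖ * ‖Linv‖) + d₂) / (1 - d₁ * (‖L‖ * ‖Linv‖) * u) * ‖W‖ := by
  have hV := ContinuousLinearMap.norm_le_opNorm_mul_norm_add_add_norm hLinv₁ V W
  rw [div_mul_eq_mul_div]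
  refine le_div_one_sub_of_le_mul_add hκ ?_
  calc ‖L V + W‖ ≤ u * (d₁ * ‖L‖ * ‖V‖ + d₂ * ‖W‖) := hres
    _ ≤ u * (d₁ * ‖L‖ * (‖Linv‖ * (‖L V + W‖ + ‖W‖)) + d₂ * ‖W‖) := by
        gcongr
        exacts [mul_nonneg hd₁.le L.opNorm_nonneg, hV]
    _ = d₁ * (‖L‖ * ‖Linv‖) * u * ‖L V + W‖ + u * (d₁ * (‖L‖ * ‖Linv‖) + d₂) * ‖W‖ := by ring

/-- Limiting-residual bound: if the invertible linear operator `ℒ` on `ℝ^{n×n}`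
(with Frobenius norm and induced operator norms) has condition number
`κ = ‖ℒ‖ ‖ℒ⁻¹‖` with `d₁ κ u < 1`, and
`‖ℒ(V) + W‖ ≤ u (d₁ ‖ℒ‖ ‖V‖ + d₂ ‖W‖)`, then
`‖ℒ(V) + W‖ ≤ u (d₁ κ + d₂)/(1 - d₁ κ u) ‖W‖`. -/
theorem residual_bound_of_solver_assumption {n : ℕ}
    (L Linv : Matrix (Fin n) (Fin n) ℝ →L[ℝ] Matrix (Fin n) (Fin n) ℝ)
    (hLinv₁ : ∀ M, Linv (L M) = M) (hLinv₂ : ∀ M, L (Linv M) = M)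
    (d₁ d₂ u : ℝ) (hd₁ : 0 < d₁) (hd₂ : 0 < d₂) (hu : 0 < u)
    (hκ : d₁ * (‖L‖ * ‖Linv‖) * u < 1)
    (W V : Matrix (Fin n) (Fin n) ℝ)
    (hres : ‖L V + W‖ ≤ u * (d₁ * ‖L‖ * ‖V‖ + d₂ * ‖W‖)) :
    ‖L V + W‖ ≤ u * (d₁ * (‖L‖ * ‖Linv‖) + d₂) / (1 - d₁ * (‖L‖ * ‖Linv‖) * u) * ‖W‖ :=
  residual_bound_of_solver_assumption_general L Linv hLinv₁ d₁ d₂ u hd₁ hu hκ W V hres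
end

section
/- Let A ∈ ℝ^{n×n} be Hurwitz and invertible. Define the (unscaled) Newton iteration A₀ = A, A_{k+1} = (A_k + A_k^{-1})/2. Then every A_k is Hurwitz and invertible, and A_k converges to −I_n as k → ∞. -/
open Matrix Filter

/-- A real square matrix is Hurwitz if every (complex) eigenvalue has
strictly negative real part. -/
def IsHurwitz {n : ℕ} (A : Matrix (Fin n) (Fin n) ℝ) : Prop :=
  ∀ μ ∈ spectrum ℂ (A.map (algebraMap ℝ ℂ)), μ.re < 0

/-! The Cayley transform `z ↦ (z + 1) / (z - 1) = 1 + 2 / (z - 1)` is an involution exchanging the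
open left half-plane and the open unit disc, and it conjugates the Newton map `z ↦ (z + z⁻¹) / 2`
to `z ↦ z ^ 2`. Hence the iterates are `Aₖ = cayley (C ^ 2 ^ k)` with `C = cayley A`, whose
spectrum lies in the unit disc. The spectra of the `Aₖ` therefore stay in the left half-plane, and
by Gelfand's formula `C ^ 2 ^ k → 0`, so that `Aₖ → cayley 0 = -1`. This runs in any complex
Banach algebra, into which the real iteration is carried by complexification. -/

open Set Topology
open scoped Ring NNReal

section Algebra

variable {A : Type*} [Ring A] [Algebra ℂ A]

noncomputable def cayley (a : A) : A := 1 + (2 : ℂ) • (a - 1)⁻¹ʳ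

noncomputable def newton (a : A) : A := (2 : ℂ)⁻¹ • (a + a⁻¹ʳ)

lemma isUnit_sub_algebraMap_of_notMem_spectrum {a : A} {r : ℂ} (h : r ∉ spectrum ℂ a) :
    IsUnit (a - algebraMap ℂ A r) := by
  rw [← neg_sub]
  exact (spectrum.notMem_iff.1 h).neg

lemma cayley_sub_one (a : A) : cayley a - 1 = (2 : ℂ) • (a - 1)⁻¹ʳ :=
  add_sub_cancel_left _ _

lemma isUnit_cayley_sub_one {a : A} (h : IsUnit (a - 1)) : IsUnit (cayley a - 1) := by
  rw [cayley_sub_one]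
  exact h.ringInverse.smul (Units.mk0 (2 : ℂ) two_ne_zero)

lemma cayley_cayley {a : A} (h : IsUnit (a - 1)) : cayley (cayley a) = a := by
  have hinv : (cayley a - 1)⁻¹ʳ = (2 : ℂ)⁻¹ • (a - 1) := by
    rw [← mul_one (cayley a - 1)⁻¹ʳ,
      Ring.inverse_mul_eq_iff_eq_mul _ _ _ (isUnit_cayley_sub_one h), cayley_sub_one,
      smul_mul_smul_comm, mul_inv_cancel₀ two_ne_zero, one_smul, Ring.inverse_mul_cancel _ h]
  rw [cayley, hinv, smul_smul, mul_inv_cancel₀ two_ne_zero, one_smul, add_sub_cancel]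

lemma cayley_zero : cayley (0 : A) = -1 := by
  rw [cayley, zero_sub, ← Units.val_one, ← Units.val_neg, Ring.inverse_unit, inv_neg, inv_one,
    Units.val_neg, Units.val_one, smul_neg, two_smul]
  abel

lemma newton_cayley {c : A} (h₁ : IsUnit (c - 1)) (h₂ : IsUnit (c + 1)) :
    newton (cayley c) = cayley (c ^ 2) := by
  have hsub : (c - 1)⁻¹ʳ - (c + 1)⁻¹ʳ = (2 : ℂ) • ((c - 1)⁻¹ʳ * (c + 1)⁻¹ʳ) := by
    rw [Ring.inverse_sub_inverse (iff_of_true h₁ h₂), add_sub_sub_cancel, mul_add, mul_one,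
      add_mul, two_smul]
  have hcayley : cayley c = (c + 1) * (c - 1)⁻¹ʳ := by
    rw [cayley, show c + 1 = (c - 1) + (2 : ℂ) • 1 by rw [two_smul]; abel, add_mul,
      Ring.mul_inverse_cancel _ h₁, smul_one_mul]
  have hinv : (cayley c)⁻¹ʳ = 1 - (2 : ℂ) • (c + 1)⁻¹ʳ := by
    rw [← mul_one (cayley c)⁻¹ʳ,
      Ring.inverse_mul_eq_iff_eq_mul _ _ _ (hcayley ▸ h₂.mul h₁.ringInverse), cayley, add_mul,
      one_mul, mul_sub, mul_one, smul_mul_smul_comm]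
    linear_combination (norm := module) (-2 : ℂ) • hsub
  have hsq : (c ^ 2 - 1)⁻¹ʳ = (c - 1)⁻¹ʳ * (c + 1)⁻¹ʳ := by
    rw [show c ^ 2 - 1 = (c + 1) * (c - 1) by noncomm_ring, Ring.inverse_mul (.inl h₂)]
  rw [newton, hinv, cayley, cayley, hsq]
  linear_combination (norm := module) hsub

lemma spectrum_cayley_subset_image {a : A} (h : IsUnit (a - 1)) :
    spectrum ℂ (cayley a) ⊆ cayley '' spectrum ℂ a := by
  intro z hz
  have hz1 : z - 1 ≠ 0 := by
    rintro hz1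
    rw [sub_eq_zero.1 hz1, spectrum.mem_iff, map_one, ← neg_sub, IsUnit.neg_iff] at hz
    exact hz (isUnit_cayley_sub_one h)
  refine ⟨cayley z, fun hμ => hz ?_, cayley_cayley (isUnit_iff_ne_zero.2 hz1)⟩
  have hμ1 : (1 - z) * (cayley z - 1) = -2 := by
    rw [cayley_sub_one, Ring.inverse_eq_inv, smul_eq_mul]
    field_simp
    ring
  have key : algebraMap ℂ A z - cayley a
      = (1 - z) • ((a - 1)⁻¹ʳ * (algebraMap ℂ A (cayley z) - a)) := by
    have : algebraMap ℂ A (cayley z) - a = (cayley z - 1) • 1 - (a - 1) := by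
      rw [Algebra.algebraMap_eq_smul_one, sub_smul, one_smul]; abel
    rw [this, mul_sub, mul_smul_comm, mul_one, Ring.inverse_mul_cancel _ h, cayley,
      Algebra.algebraMap_eq_smul_one]
    linear_combination (norm := module) -(hμ1 • (a - 1)⁻¹ʳ)
  rw [spectrum.mem_resolventSet_iff, key]
  have h1z : (1 : ℂ) - z ≠ 0 := by rw [← neg_sub]; exact neg_ne_zero.2 hz1
  exact (h.ringInverse.mul (spectrum.mem_resolventSet_iff.1 hμ)).smul (Units.mk0 _ h1z)

lemma spectrum_cayley_subset_of_mapsTo {a : A} {S T : Set ℂ} (h1 : (1 : ℂ) ∉ S)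
    (hST : MapsTo cayley S T) (ha : spectrum ℂ a ⊆ S) : spectrum ℂ (cayley a) ⊆ T := by
  have h : IsUnit (a - 1) := by
    simpa using isUnit_sub_algebraMap_of_notMem_spectrum fun h => h1 (ha h)
  exact (spectrum_cayley_subset_image h).trans ((image_mono ha).trans hST.image_subset)

end Algebra

namespace Complex

lemma norm_cayley_lt_one_iff {z : ℂ} (hz : z ≠ 1) : ‖cayley z‖ < 1 ↔ z.re < 0 := by
  have hz1 : z - 1 ≠ 0 := sub_ne_zero.2 hz
  have hform : cayley z = (z + 1) / (z - 1) := by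
    rw [cayley, Ring.inverse_eq_inv, smul_eq_mul]
    field_simp
    ring
  rw [hform, norm_div, div_lt_one (norm_pos_iff.2 hz1),
    ← sq_lt_sq₀ (norm_nonneg _) (norm_nonneg _), Complex.sq_norm, Complex.sq_norm, normSq_apply,
    normSq_apply]
  simp only [add_re, sub_re, add_im, sub_im, one_re, one_im]
  constructor <;> intro h <;> nlinarith

lemma mapsTo_cayley_re_neg_ball : MapsTo cayley {z : ℂ | z.re < 0} (Metric.ball 0 1) := by
  intro z hz
  have hz1 : z ≠ 1 := by rintro rfl; norm_num at hz
  simpa using (norm_cayley_lt_one_iff hz1).2 hz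

lemma mapsTo_cayley_ball_re_neg : MapsTo cayley (Metric.ball 0 1) {z : ℂ | z.re < 0} := by
  intro z hz
  have hz1 : z - 1 ≠ 0 := by rintro h; simp [sub_eq_zero.1 h] at hz
  have hcz : cayley z ≠ 1 := by
    rw [← sub_ne_zero, cayley_sub_one, Ring.inverse_eq_inv, smul_eq_mul]
    exact mul_ne_zero two_ne_zero (inv_ne_zero hz1)
  show (cayley z).re < 0
  rw [← norm_cayley_lt_one_iff hcz, cayley_cayley (isUnit_iff_ne_zero.2 hz1)]
  simpa using hz

end Complex

section Iteration

variable {A : Type*} [Ring A] [Algebra ℂ A]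

lemma spectrum_pow_subset_ball {a : A} (h : spectrum ℂ a ⊆ Metric.ball 0 1) {m : ℕ}
    (hm : 0 < m) : spectrum ℂ (a ^ m) ⊆ Metric.ball 0 1 := by
  rw [spectrum.map_pow_of_pos a hm]
  rintro _ ⟨z, hz, rfl⟩
  have hz : ‖z‖ < 1 := by simpa using h hz
  simpa using pow_lt_one₀ (norm_nonneg z) hz hm.ne'

lemma spectrum_cayley_subset_ball {a : A} (ha : spectrum ℂ a ⊆ {z | z.re < 0}) :
    spectrum ℂ (cayley a) ⊆ Metric.ball 0 1 :=
  spectrum_cayley_subset_of_mapsTo (by simp) Complex.mapsTo_cayley_re_neg_ball ha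

lemma spectrum_cayley_subset_re_neg {c : A} (hc : spectrum ℂ c ⊆ Metric.ball 0 1) :
    spectrum ℂ (cayley c) ⊆ {z | z.re < 0} :=
  spectrum_cayley_subset_of_mapsTo (by simp) Complex.mapsTo_cayley_ball_re_neg hc

lemma newton_iterate_eq_cayley_pow {a : A} (ha : spectrum ℂ a ⊆ {z | z.re < 0}) (k : ℕ) :
    newton^[k] a = cayley (cayley a ^ 2 ^ k) := by
  have hc := spectrum_cayley_subset_ball ha
  induction k with
  | zero =>
    have h₁ : IsUnit (a - 1) := by
      simpa using isUnit_sub_algebraMap_of_notMem_spectrum (r := 1) fun h =>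
        absurd (ha h) (by simp)
    rw [Function.iterate_zero_apply, pow_zero, pow_one, cayley_cayley h₁]
  | succ k ih =>
    have hunit (r : ℂ) (hr : ‖r‖ = 1) : IsUnit (cayley a ^ 2 ^ k - algebraMap ℂ A r) :=
      isUnit_sub_algebraMap_of_notMem_spectrum fun h => by
        simpa [hr] using spectrum_pow_subset_ball hc (by positivity) h
    have h₁ := hunit 1 (by simp)
    have h₂ := hunit (-1) (by simp)
    rw [map_one] at h₁
    rw [map_neg, map_one, sub_neg_eq_add] at h₂
    rw [Function.iterate_succ_apply', ih, newton_cayley h₁ h₂, ← pow_mul, pow_succ]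

lemma spectrum_newton_iterate_subset {a : A} (ha : spectrum ℂ a ⊆ {z | z.re < 0}) (k : ℕ) :
    spectrum ℂ (newton^[k] a) ⊆ {z | z.re < 0} := by
  rw [newton_iterate_eq_cayley_pow ha]
  exact spectrum_cayley_subset_re_neg
    (spectrum_pow_subset_ball (spectrum_cayley_subset_ball ha) (by positivity))

end Iteration

section BanachAlgebra

variable {A : Type*} [NormedRing A] [NormedAlgebra ℂ A] [CompleteSpace A]

lemma spectralRadius_lt_one_of_spectrum_subset_ball {a : A}
    (h : spectrum ℂ a ⊆ Metric.ball 0 1) : spectralRadius ℂ a < 1 := by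
  rcases (spectrum ℂ a).eq_empty_or_nonempty with he | hne
  · simp [spectralRadius, he]
  · simpa using spectrum.spectralRadius_lt_of_forall_lt_of_nonempty hne (r := 1)
      fun z hz => by simpa [← NNReal.coe_lt_coe] using h hz

lemma continuousAt_cayley {a : A} (h : IsUnit (a - 1)) : ContinuousAt cayley a :=
  continuousAt_const.add <|
    ((NormedRing.inverse_continuousAt h.unit).comp_of_eq
      (continuousAt_id.sub continuousAt_const) h.unit_spec.symm).const_smul (2 : ℂ)

theorem tendsto_pow_atTop_nhds_zero_of_spectralRadius_lt_one {a : A}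
    (h : spectralRadius ℂ a < 1) : Tendsto (fun m : ℕ => a ^ m) atTop (𝓝 0) := by
  obtain ⟨r, hr, hr1⟩ := exists_between h
  lift r to ℝ≥0 using hr1.ne_top
  have hgelfand := spectrum.pow_nnnorm_pow_one_div_tendsto_nhds_spectralRadius a
  have hbound : ∀ᶠ m : ℕ in atTop, ‖a ^ m‖ ≤ (r : ℝ) ^ m := by
    filter_upwards [hgelfand.eventually_lt_const hr, eventually_ne_atTop 0] with m hm hm0
    have := pow_le_pow_left₀ zero_le hm.le m
    rw [one_div, ENNReal.rpow_inv_natCast_pow hm0] at this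
    exact_mod_cast this
  exact squeeze_zero_norm' hbound
    (tendsto_pow_atTop_nhds_zero_of_lt_one r.coe_nonneg (by exact_mod_cast hr1))

theorem tendsto_newton_iterate_neg_one {a : A} (ha : spectrum ℂ a ⊆ {z | z.re < 0}) :
    Tendsto (fun k => newton^[k] a) atTop (𝓝 (-1)) := by
  have hpow : Tendsto (fun k => cayley a ^ 2 ^ k) atTop (𝓝 0) :=
    (tendsto_pow_atTop_nhds_zero_of_spectralRadius_lt_one
      (spectralRadius_lt_one_of_spectrum_subset_ball (spectrum_cayley_subset_ball ha))).comp
      (tendsto_pow_atTop_atTop_of_one_lt one_lt_two)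
  rw [funext (newton_iterate_eq_cayley_pow ha), ← cayley_zero]
  exact (continuousAt_cayley (by simp)).tendsto.comp hpow

end BanachAlgebra

section Matrix

variable {m : Type*} [Fintype m] [DecidableEq m]

lemma Matrix.map_nonsing_inv {K L : Type*} [Field K] [Field L] (f : K →+* L) (B : Matrix m m K) :
    B⁻¹.map f = (B.map f)⁻¹ := by
  have hadj := RingHom.map_adjugate f B
  have hdet := RingHom.map_det f B
  simp only [RingHom.mapMatrix_apply] at hadj hdet
  rw [inv_def, inv_def, ← hadj, ← hdet, Ring.inverse_eq_inv, Ring.inverse_eq_inv, ← map_inv₀]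
  ext i j
  simp

lemma Matrix.isUnit_map_iff {K L : Type*} [Field K] [Field L] (f : K →+* L) (B : Matrix m m K) :
    IsUnit (B.map f) ↔ IsUnit B := by
  rw [isUnit_iff_isUnit_det, isUnit_iff_isUnit_det, ← RingHom.mapMatrix_apply,
    ← RingHom.map_det, _root_.isUnit_map_iff]

lemma Matrix.map_newton (B : Matrix m m ℝ) :
    ((2 : ℝ)⁻¹ • (B + B⁻¹)).map (algebraMap ℝ ℂ) = newton (B.map (algebraMap ℝ ℂ)) := by
  rw [newton, ← nonsing_inv_eq_ringInverse, ← map_nonsing_inv]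
  ext i j
  simp [mul_add]

attribute [local instance] Matrix.linftyOpNormedRing Matrix.linftyOpNormedAlgebra in
theorem Matrix.tendsto_newton_iterate_neg_one {M : Matrix m m ℂ}
    (hM : spectrum ℂ M ⊆ {z | z.re < 0}) :
    Tendsto (fun k => newton^[k] M) atTop (𝓝 (-1)) :=
  _root_.tendsto_newton_iterate_neg_one hM

end Matrix

theorem sign_newton_converges_to_neg_one_general {n : ℕ}
    (A : Matrix (Fin n) (Fin n) ℝ)
    (hA : IsHurwitz A)
    (Aseq : ℕ → Matrix (Fin n) (Fin n) ℝ)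
    (h0 : Aseq 0 = A)
    (hrec : ∀ k, Aseq (k + 1) = (2 : ℝ)⁻¹ • (Aseq k + (Aseq k)⁻¹)) :
    (∀ k, IsHurwitz (Aseq k) ∧ IsUnit (Aseq k).det) ∧
    Tendsto Aseq atTop (nhds (-1)) := by
  have hcomplex (k : ℕ) :
      (Aseq k).map (algebraMap ℝ ℂ) = newton^[k] (A.map (algebraMap ℝ ℂ)) := by
    induction k with
    | zero => rw [h0, Function.iterate_zero_apply]
    | succ k ih => rw [hrec, map_newton, ih, Function.iterate_succ_apply']
  have hhurwitz (k : ℕ) : IsHurwitz (Aseq k) := fun μ hμ =>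
    spectrum_newton_iterate_subset hA k (hcomplex k ▸ hμ)
  refine ⟨fun k => ⟨hhurwitz k, ?_⟩, ?_⟩
  · rw [← isUnit_iff_isUnit_det, ← Matrix.isUnit_map_iff (algebraMap ℝ ℂ),
      ← spectrum.zero_notMem_iff ℂ]
    exact fun h => lt_irrefl _ (hhurwitz k 0 h)
  · have hreal (k : ℕ) : Aseq k = (newton^[k] (A.map (algebraMap ℝ ℂ))).map Complex.re := by
      rw [← hcomplex]
      ext i j
      simp
    have hneg : (-1 : Matrix (Fin n) (Fin n) ℂ).map Complex.re = -1 := by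
      ext i j
      by_cases hij : i = j <;> simp [one_apply, hij]
    have hcont : Continuous fun M : Matrix (Fin n) (Fin n) ℂ => M.map Complex.re :=
      continuous_id.matrix_map Complex.continuous_re
    rw [funext hreal, ← hneg]
    exact (hcont.tendsto _).comp (Matrix.tendsto_newton_iterate_neg_one hA)

/-- For Hurwitz invertible `A`, the Newton iteration
`A₀ = A`, `A_{k+1} = (A_k + A_k⁻¹)/2` produces Hurwitz invertible iterates
converging to `-I`. -/
theorem sign_newton_converges_to_neg_one {n : ℕ}
    (A : Matrix (Fin n) (Fin n) ℝ)
    (hA : IsHurwitz A) (hinv : IsUnit A.det)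
    (Aseq : ℕ → Matrix (Fin n) (Fin n) ℝ)
    (h0 : Aseq 0 = A)
    (hrec : ∀ k, Aseq (k + 1) = (2 : ℝ)⁻¹ • (Aseq k + (Aseq k)⁻¹)) :
    (∀ k, IsHurwitz (Aseq k) ∧ IsUnit (Aseq k).det) ∧
    Tendsto Aseq atTop (nhds (-1)) :=
  sign_newton_converges_to_neg_one_general A hA Aseq h0 hrec
end

section
/- Let A be Hurwitz, W symmetric positive semidefinite, and X the solution of AX + XA^T + W = 0. Define A₀ = A, W₀ = W, and the coupled iterations A_{k+1} = (A_k + A_k^{-1})/2, W_{k+1} = (W_k + A_k^{-1} W_k A_k^{-T})/2. Then for every k, the identity A_k X + X A_k^T + W_k = 0 holds. -/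
open Matrix

namespace SignNewtonAux

variable {n : ℕ}

noncomputable def cmap (A : Matrix (Fin n) (Fin n) ℝ) : Matrix (Fin n) (Fin n) ℂ :=
  A.map (algebraMap ℝ ℂ)

lemma cmap_mul (A B : Matrix (Fin n) (Fin n) ℝ) : cmap (A * B) = cmap A * cmap B :=
  Matrix.map_mul

lemma cmap_one : cmap (1 : Matrix (Fin n) (Fin n) ℝ) = 1 :=
  Matrix.map_one _ (map_zero _) (map_one _)

lemma cmap_add (A B : Matrix (Fin n) (Fin n) ℝ) : cmap (A + B) = cmap A + cmap B :=
  Matrix.map_add _ (map_add _) _ _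

lemma cmap_smul (r : ℝ) (A : Matrix (Fin n) (Fin n) ℝ) :
    cmap (r • A) = (algebraMap ℝ ℂ r) • cmap A := by
  ext i j
  simp [cmap, Matrix.map_apply, Matrix.smul_apply, smul_eq_mul, _root_.map_mul]

lemma isUnit_of_isUnit_cmap {A : Matrix (Fin n) (Fin n) ℝ} (h : IsUnit (cmap A)) : IsUnit A := by
  rw [Matrix.isUnit_iff_isUnit_det] at h ⊢
  have hdet : (A.map (algebraMap ℝ ℂ)).det = algebraMap ℝ ℂ A.det :=
    ((algebraMap ℝ ℂ).map_det A).symm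
  rw [cmap, hdet] at h
  rcases h with ⟨u, hu⟩
  simp only [isUnit_iff_ne_zero]
  intro h0
  rw [h0, map_zero] at hu
  exact u.ne_zero hu

lemma cmap_inv {A : Matrix (Fin n) (Fin n) ℝ} (h : IsUnit A) : cmap A⁻¹ = (cmap A)⁻¹ := by
  have hd := (Matrix.isUnit_iff_isUnit_det A).mp h
  have : cmap A * cmap A⁻¹ = 1 := by
    rw [← cmap_mul, Matrix.mul_nonsing_inv _ hd, cmap_one]
  exact (Matrix.inv_eq_right_inv this).symm

lemma hurwitz_isUnit {A : Matrix (Fin n) (Fin n) ℝ} (hA : IsHurwitz A) : IsUnit A := by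
  apply isUnit_of_isUnit_cmap
  rw [← spectrum.zero_notMem_iff ℂ]
  intro h0
  simpa using hA 0 h0

/-- key factorization lemma over ℂ -/
lemma step_isUnit {B : Matrix (Fin n) (Fin n) ℂ} (hB : IsUnit B)
    (hspec : ∀ μ ∈ spectrum ℂ B, μ.re < 0) {μ : ℂ} (hμ : 0 ≤ μ.re) :
    IsUnit (algebraMap ℂ (Matrix (Fin n) (Fin n) ℂ) μ - (2:ℂ)⁻¹ • (B + B⁻¹)) := by
  obtain ⟨s, hs⟩ := IsAlgClosed.exists_pow_nat_eq (μ ^ 2 - 1) zero_lt_two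
  set l₁ := μ + s with hl₁
  set l₂ := μ - s with hl₂
  have hprod : l₁ * l₂ = 1 := by rw [hl₁, hl₂]; ring_nf; rw [hs]; ring
  have hsum : l₁ + l₂ = 2 * μ := by ring
  have h₁ne : l₁ ≠ 0 := fun h => by simp [h] at hprod
  have hinv : l₂ = l₁⁻¹ := by field_simp; linear_combination hprod
  have hre₂ : l₂.re = l₁.re / Complex.normSq l₁ := by rw [hinv, Complex.inv_re]
  have hsumre : l₁.re + l₂.re = 2 * μ.re := by
    have := congrArg Complex.re hsum
    simpa using this
  have hnormpos : 0 < Complex.normSq l₁ := Complex.normSq_pos.mpr h₁ne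
  have h₁re : 0 ≤ l₁.re := by
    by_contra h
    push_neg at h
    have : l₂.re < 0 := by rw [hre₂]; exact div_neg_of_neg_of_pos h hnormpos
    nlinarith
  have h₂re : 0 ≤ l₂.re := by
    rw [hre₂]; positivity
  have hf₁ : IsUnit (B - l₁ • 1) := by
    have : l₁ ∉ spectrum ℂ B := fun h => absurd (hspec l₁ h) (not_lt.mpr h₁re)
    rw [spectrum.notMem_iff] at this
    rw [Algebra.algebraMap_eq_smul_one] at this
    simpa using this.neg
  have hf₂ : IsUnit (B - l₂ • 1) := by
    have : l₂ ∉ spectrum ℂ B := fun h => absurd (hspec l₂ h) (not_lt.mpr h₂re)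
    rw [spectrum.notMem_iff] at this
    rw [Algebra.algebraMap_eq_smul_one] at this
    simpa using this.neg
  have hBinv : IsUnit B⁻¹ := Matrix.isUnit_nonsing_inv_iff.mpr hB
  have hBB : B⁻¹ * B = 1 := Matrix.nonsing_inv_mul _ ((Matrix.isUnit_iff_isUnit_det B).mp hB)
  have hfact : algebraMap ℂ (Matrix (Fin n) (Fin n) ℂ) μ - (2:ℂ)⁻¹ • (B + B⁻¹)
      = ((-(2:ℂ)⁻¹) • (1 : Matrix (Fin n) (Fin n) ℂ)) * (B⁻¹ * ((B - l₁ • 1) * (B - l₂ • 1))) := by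
    rw [Algebra.algebraMap_eq_smul_one]
    have expand : (B - l₁ • 1) * (B - l₂ • 1) = B * B - (2 * μ) • B + 1 := by
      simp only [Matrix.sub_mul, Matrix.mul_sub, Matrix.smul_mul, Matrix.mul_smul,
        Matrix.one_mul, Matrix.mul_one, smul_sub, smul_smul]
      rw [mul_comm l₂ l₁, hprod, one_smul]
      simp only [hl₁, hl₂]
      module
    rw [expand]
    rw [Matrix.mul_add, Matrix.mul_sub, ← Matrix.mul_assoc, hBB, Matrix.one_mul,
      Matrix.mul_smul, hBB, Matrix.mul_one]
    rw [Matrix.smul_mul, Matrix.one_mul]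
    module
  rw [hfact]
  have hscal : IsUnit ((-(2:ℂ)⁻¹) • (1 : Matrix (Fin n) (Fin n) ℂ)) := by
    rw [← Algebra.algebraMap_eq_smul_one]
    exact (isUnit_iff_ne_zero.mpr (by norm_num)).map (algebraMap ℂ (Matrix (Fin n) (Fin n) ℂ))
  exact hscal.mul (hBinv.mul (hf₁.mul hf₂))

lemma hurwitz_step {A : Matrix (Fin n) (Fin n) ℝ} (hA : IsHurwitz A) :
    IsHurwitz ((2 : ℝ)⁻¹ • (A + A⁻¹)) := by
  have hU : IsUnit A := hurwitz_isUnit hA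
  have hB : IsUnit (cmap A) := by
    rw [← spectrum.zero_notMem_iff ℂ]
    intro h0
    simpa using hA 0 h0
  have hmap : cmap ((2 : ℝ)⁻¹ • (A + A⁻¹)) = (2:ℂ)⁻¹ • (cmap A + (cmap A)⁻¹) := by
    rw [cmap_smul, cmap_add, cmap_inv hU]
    norm_num
  intro μ hμ
  rw [show (((2 : ℝ)⁻¹ • (A + A⁻¹)).map (algebraMap ℝ ℂ)) = cmap ((2 : ℝ)⁻¹ • (A + A⁻¹)) from rfl,
    hmap] at hμ
  by_contra h
  push_neg at h
  exact (spectrum.notMem_iff.mpr (step_isUnit hB hA h)) hμ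

end SignNewtonAux

open SignNewtonAux in
/-- The coupled sign function Newton iteration preserves the Lyapunov relation:
if `A X + X Aᵀ + W = 0` then `A_k X + X A_kᵀ + W_k = 0` for all `k`. -/
theorem sign_newton_lyapunov_invariant {n : ℕ}
    (A W X : Matrix (Fin n) (Fin n) ℝ)
    (hA : IsHurwitz A) (hW : W.PosSemidef)
    (hX : A * X + X * Aᵀ + W = 0)
    (Aseq Wseq : ℕ → Matrix (Fin n) (Fin n) ℝ)
    (hA0 : Aseq 0 = A) (hW0 : Wseq 0 = W)
    (hArec : ∀ k, Aseq (k + 1) = (2 : ℝ)⁻¹ • (Aseq k + (Aseq k)⁻¹))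
    (hWrec : ∀ k, Wseq (k + 1) =
      (2 : ℝ)⁻¹ • (Wseq k + (Aseq k)⁻¹ * Wseq k * ((Aseq k)⁻¹)ᵀ)) :
    ∀ k, Aseq k * X + X * (Aseq k)ᵀ + Wseq k = 0 := by
  have key : ∀ k, IsHurwitz (Aseq k) ∧ Aseq k * X + X * (Aseq k)ᵀ + Wseq k = 0 := by
    intro k
    induction k with
    | zero => exact ⟨hA0 ▸ hA, by rw [hA0, hW0]; exact hX⟩
    | succ k ih =>
      obtain ⟨ihH, ihL⟩ := ih
      set M := Aseq k with hM
      have hU : IsUnit M := hurwitz_isUnit ihH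
      have hUd : IsUnit M.det := (Matrix.isUnit_iff_isUnit_det M).mp hU
      have h1 : M⁻¹ * M = 1 := Matrix.nonsing_inv_mul _ hUd
      have h2 : Mᵀ * (M⁻¹)ᵀ = 1 := by rw [← Matrix.transpose_mul, h1, Matrix.transpose_one]
      constructor
      · rw [hArec k]; exact hurwitz_step ihH
      · have e2 : M⁻¹ * X + X * (M⁻¹)ᵀ + M⁻¹ * Wseq k * (M⁻¹)ᵀ = 0 := by
          have := congrArg (fun Y => M⁻¹ * Y * (M⁻¹)ᵀ) ihL
          simp only [Matrix.mul_zero, Matrix.zero_mul] at this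
          rw [Matrix.mul_add, Matrix.mul_add, Matrix.add_mul, Matrix.add_mul] at this
          rw [← Matrix.mul_assoc M⁻¹ M X, h1, Matrix.one_mul] at this
          rw [Matrix.mul_assoc M⁻¹ (X * Mᵀ) (M⁻¹)ᵀ, Matrix.mul_assoc X Mᵀ (M⁻¹)ᵀ, h2,
            Matrix.mul_one] at this
          rw [Matrix.mul_assoc] at this
          calc M⁻¹ * X + X * (M⁻¹)ᵀ + M⁻¹ * Wseq k * (M⁻¹)ᵀ
              = X * (M⁻¹)ᵀ + M⁻¹ * X + M⁻¹ * (Wseq k * (M⁻¹)ᵀ) := by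
                rw [Matrix.mul_assoc]; abel
            _ = 0 := this
        rw [hArec k, hWrec k, ← hM]
        rw [Matrix.transpose_smul, Matrix.transpose_add]
        rw [Matrix.smul_mul, Matrix.mul_smul]
        rw [← smul_add, ← smul_add]
        rw [show (M + M⁻¹) * X + X * (Mᵀ + (M⁻¹)ᵀ) + (Wseq k + M⁻¹ * Wseq k * (M⁻¹)ᵀ)
            = (M * X + X * Mᵀ + Wseq k) + (M⁻¹ * X + X * (M⁻¹)ᵀ + M⁻¹ * Wseq k * (M⁻¹)ᵀ) by
          rw [Matrix.add_mul, Matrix.mul_add]; abel]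
        rw [ihL, e2]
        simp
  exact fun k => (key k).2
end
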